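/- Let σ be an involution in S_n with associated Motzkin path μ (μ_i = U if i<σ(i), L if i=σ(i), D if i>σ(i)). For each s with μ_s ∈ {U,L}, the number of visible inversions of σ of the form (s,t) equals the height h_s(μ), which equals the number of pairs (u, σ(u)) with u < σ(u) and u ≤ s < σ(u). -/

import Mathlib

open Finset

/-- Steps of a Motzkin path: up, level, down. -/
inductive Step | U | L | D
deriving DecidableEq

instance instFintypeStep : Fintype Step :=
  ⟨{Step.U, Step.L, Step.D}, fun x => by cases x <;> simp⟩

/-- `μ` is a Motzkin path: every prefix has at least as many `U`'s as `D`'s, and the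
total numbers of `U`'s and `D`'s agree. -/
def IsMotzkin {n : ℕ} (μ : Fin n → Step) : Prop :=
  (∀ k : Fin n, (Finset.univ.filter (fun j => j ≤ k ∧ μ j = Step.D)).card
      ≤ (Finset.univ.filter (fun j => j ≤ k ∧ μ j = Step.U)).card)
  ∧ (Finset.univ.filter (fun j => μ j = Step.U)).card
    = (Finset.univ.filter (fun j => μ j = Step.D)).card

/-- The height of the `i`-th step of `μ`: the larger of the two `y`-coordinates of
the step, i.e. `#{j ≤ i : μ j = U} − #{j < i : μ j = D}`. -/
def height {n : ℕ} (μ : Fin n → Step) (i : Fin n) : ℕ :=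
  (Finset.univ.filter (fun j => j ≤ i ∧ μ j = Step.U)).card
    - (Finset.univ.filter (fun j => j < i ∧ μ j = Step.D)).card

/-- Biane's word of an involution: `U` if `i < σ i`, `L` if `i = σ i`, `D` if `i > σ i`. -/
def bpath {n : ℕ} (σ : Equiv.Perm (Fin n)) (i : Fin n) : Step :=
  if i < σ i then Step.U else if σ i = i then Step.L else Step.D

/-- Biane's label of step `i`: `|{j ≥ i : σ j ≤ σ i}|`. -/
def blabel {n : ℕ} (σ : Equiv.Perm (Fin n)) (i : Fin n) : ℕ :=
  (Finset.univ.filter (fun j => i ≤ j ∧ σ j ≤ σ i)).card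


/-!
Since `σ` is an involution, its non-fixed points form arcs `u < σ u`. The height of the Motzkin
path after step `s` is the number of arcs opened at or before `s` minus the number closed
before `s`, i.e. the number of arcs `u ≤ s < σ u` covering `s`. Applying `σ` sends a visible
inversion `(s, t)` to the opening point `σ t ≤ s` of an arc closing at `t > s`, and back.
-/

open Finset

variable {n : ℕ} {σ : Equiv.Perm (Fin n)}

@[simp]
lemma bpath_eq_U_iff (j : Fin n) : bpath σ j = Step.U ↔ j < σ j := by
  unfold bpath
  split_ifs with hlt heq <;> simp_all

@[simp]
lemma bpath_eq_D_iff (j : Fin n) : bpath σ j = Step.D ↔ σ j < j := by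
  unfold bpath
  split_ifs with hlt heq
  · simpa using hlt.asymm
  · simp [heq]
  · simpa using lt_of_le_of_ne (not_lt.mp hlt) heq

lemma card_down_steps_lt_eq_card_arcs_closed_lt (hσ : Function.Involutive σ) (s : Fin n) :
    #{j | j < s ∧ bpath σ j = Step.D} = #{u | u < σ u ∧ σ u < s} :=
  card_equiv σ fun j => by simp [hσ j, and_comm]

lemma height_bpath_eq_card_arcs_covering (hσ : Function.Involutive σ) {s : Fin n}
    (hs : s ≤ σ s) : height (bpath σ) s = #{u | u ≤ s ∧ s < σ u} := by
  have hclosed_sub :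
      univ.filter (fun u => u < σ u ∧ σ u < s) ⊆ univ.filter (fun u => u ≤ s ∧ u < σ u) := by
    intro u
    simp only [mem_filter, mem_univ, true_and]
    exact fun ⟨hu, hus⟩ => ⟨(hu.trans hus).le, hu⟩
  -- An arc opened by `u ≤ s` cannot close exactly at `s`, since then `u = σ s ≥ s`.
  have hopen_sdiff_closed : univ.filter (fun u => u ≤ s ∧ u < σ u)
      \ univ.filter (fun u => u < σ u ∧ σ u < s) = univ.filter (fun u => u ≤ s ∧ s < σ u) := by
    ext u
    simp only [mem_sdiff, mem_filter, mem_univ, true_and]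
    constructor
    · rintro ⟨⟨hus, hu⟩, hnot⟩
      refine ⟨hus, lt_of_le_of_ne (not_lt.mp fun h => hnot ⟨hu, h⟩) fun hsu => ?_⟩
      have hu_eq : u = σ s := by rw [hsu, hσ]
      exact hu.ne ((le_antisymm hus (hs.trans_eq hu_eq.symm)).trans hsu)
    · rintro ⟨hus, hsu⟩
      exact ⟨⟨hus, hus.trans_lt hsu⟩, fun h => h.2.not_gt hsu⟩
  have hopen : #{j | j ≤ s ∧ bpath σ j = Step.U} = #{u | u ≤ s ∧ u < σ u} := by
    simp only [bpath_eq_U_iff]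
  rw [height, hopen, card_down_steps_lt_eq_card_arcs_closed_lt hσ, ← hopen_sdiff_closed,
    card_sdiff_of_subset hclosed_sub]

lemma card_visible_inversions_eq_card_arcs_covering (hσ : Function.Involutive σ) {s : Fin n}
    (hs : s ≤ σ s) :
    #{t | s < t ∧ σ t < σ s ∧ σ t ≤ min s (σ s)} = #{u | u ≤ s ∧ s < σ u} := by
  refine card_equiv σ fun t => ?_
  simp only [mem_filter, mem_univ, true_and, hσ t, min_eq_left hs]
  constructor
  · exact fun ⟨hst, _, hts⟩ => ⟨hts, hst⟩
  · rintro ⟨hts, hst⟩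
    exact ⟨hst, lt_of_le_of_ne (hts.trans hs) fun h => hst.ne' (σ.injective h), hts⟩

/-- For an involution `σ` and a step `s` with `μ_s ∈ {U, L}` (i.e. `s ≤ σ s`), the
number of visible inversions of the form `(s, t)` equals the height `h_s(μ)`, which
in turn equals `#{u : u ≤ s < σ u}`. -/
theorem visible_inversions_up_level {n : ℕ} (σ : Equiv.Perm (Fin n))
    (hinv : ∀ i, σ (σ i) = i) (s : Fin n) (hs : s ≤ σ s) :
    (Finset.univ.filter
        (fun t : Fin n => s < t ∧ σ t < σ s ∧ σ t ≤ min s (σ s))).card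
      = height (bpath σ) s
    ∧ height (bpath σ) s
      = (Finset.univ.filter (fun u : Fin n => u ≤ s ∧ s < σ u)).card := by
  have hcover := height_bpath_eq_card_arcs_covering hinv hs
  exact ⟨(card_visible_inversions_eq_card_arcs_covering hinv hs).trans hcover.symm, hcover⟩
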